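/- arXiv:0812.2941 — 3 statements merged into one kernel-verified Lean document; each statement's English description precedes it below -/
import Mathlib

section
/- Let T be an n×n primitive matrix with real entries (n ≥ 1). Then the spectral radius λ of T is a (real, positive) eigenvalue of T, and T admits a right eigenvector with all entries strictly positive for the eigenvalue λ, and likewise a left eigenvector (equivalently, a right eigenvector of the transpose of T) with all entries strictly positive for the eigenvalue λ. -/
open Matrix

/-- A real square matrix is primitive if it is entrywise nonnegative and some
positive power of it has all entries strictly positive. -/
def Matrix.IsPrimitive' {n : ℕ} (T : Matrix (Fin n) (Fin n) ℝ) : Prop :=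
  (∀ i j, 0 ≤ T i j) ∧ ∃ k : ℕ, 0 < k ∧ ∀ i j, 0 < (T ^ k) i j

/-- The spectral radius of a real square matrix: the maximum of the absolute
values of its complex eigenvalues. -/
noncomputable def specRad {n : ℕ} (A : Matrix (Fin n) (Fin n) ℝ) : ℝ :=
  sSup {x : ℝ | ∃ β : ℂ, β ∈ spectrum ℂ (A.map (Complex.ofReal)) ∧ x = ‖β‖}

/-!
On the compact set of pairs `(r, x)` with `x` a probability vector and `r • x ≤ T x`
(Collatz–Wielandt), a pair with maximal `r` is an eigenpair: otherwise applying the positive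
matrix `T ^ k` makes the inequality strict in every coordinate, and `r` could be raised.
Positivity of `T ^ k x = r ^ k • x` then forces `x > 0` and `r > 0`. The same for `Tᵀ` gives a
positive left eigenvector `w`, and pairing with `w` shows that `c • y ≤ T y` with `y ≥ 0`,
`y ≠ 0` implies `c ≤ r`. This identifies the two eigenvalues and, with `y = |x|` for a complex
eigenvector `x` (triangle inequality), bounds the modulus of every complex eigenvalue by `r`.
-/

namespace Matrix

section StrictOrderedSemiring

variable {m ι R : Type*} [Fintype ι] [Semiring R] [PartialOrder R] [IsStrictOrderedRing R]

theorem dotProduct_pos_of_pos_of_nonneg_of_ne_zero {v w : ι → R} (hv : ∀ i, 0 < v i)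
    (hw : 0 ≤ w) (hw0 : w ≠ 0) : 0 < v ⬝ᵥ w := by
  obtain ⟨j, hj⟩ := Function.ne_iff.mp hw0
  exact Finset.sum_pos' (fun i _ => mul_nonneg (hv i).le (hw i))
    ⟨j, Finset.mem_univ j, mul_pos (hv j) ((hw j).lt_of_ne' hj)⟩

theorem mulVec_nonneg {A : Matrix m ι R} {w : ι → R} (hA : ∀ i j, 0 ≤ A i j) (hw : 0 ≤ w) :
    0 ≤ A *ᵥ w :=
  fun i => dotProduct_nonneg_of_nonneg (hA i) hw

theorem mulVec_pos {A : Matrix m ι R} {w : ι → R} (hA : ∀ i j, 0 < A i j) (hw : 0 ≤ w)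
    (hw0 : w ≠ 0) (i : m) : 0 < (A *ᵥ w) i :=
  dotProduct_pos_of_pos_of_nonneg_of_ne_zero (hA i) hw hw0

end StrictOrderedSemiring

theorem pow_mulVec_of_mulVec_eq_smul {ι R : Type*} [Fintype ι] [DecidableEq ι] [CommSemiring R]
    {A : Matrix ι ι R} {v : ι → R} {c : R} (h : A *ᵥ v = c • v) (k : ℕ) :
    (A ^ k) *ᵥ v = c ^ k • v := by
  induction k with
  | zero => simp
  | succ k ih => rw [pow_succ', ← mulVec_mulVec, ih, mulVec_smul, h, smul_smul, ← pow_succ]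

theorem le_of_smul_le_mulVec {ι R : Type*} [Fintype ι] [CommRing R] [LinearOrder R]
    [IsStrictOrderedRing R] {T : Matrix ι ι R} {w y : ι → R} {r c : R}
    (hw : ∀ i, 0 < w i) (hTw : Tᵀ *ᵥ w = r • w) (hy : 0 ≤ y) (hy0 : y ≠ 0)
    (h : c • y ≤ T *ᵥ y) : c ≤ r := by
  have hwy : 0 < w ⬝ᵥ y := dotProduct_pos_of_pos_of_nonneg_of_ne_zero hw hy hy0
  refine le_of_mul_le_mul_right ?_ hwy
  calc c * (w ⬝ᵥ y) = w ⬝ᵥ (c • y) := by rw [dotProduct_smul, smul_eq_mul]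
    _ ≤ w ⬝ᵥ (T *ᵥ y) := dotProduct_le_dotProduct_of_nonneg_left h fun i => (hw i).le
    _ = r * (w ⬝ᵥ y) := by
      rw [dotProduct_mulVec, ← mulVec_transpose, hTw, smul_dotProduct, smul_eq_mul]

theorem mem_spectrum_of_mulVec_eq_smul {ι K : Type*} [Fintype ι] [DecidableEq ι] [Field K]
    {A : Matrix ι ι K} {v : ι → K} {c : K} (hv : v ≠ 0) (h : A *ᵥ v = c • v) :
    c ∈ spectrum K A := by
  rw [← spectrum_toLin']
  exact Module.End.hasEigenvalue_of_hasEigenvector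
    ⟨Module.End.mem_eigenspace_iff.mpr (by rwa [toLin'_apply]), hv⟩ |>.mem_spectrum

theorem exists_mulVec_eq_smul_of_mem_spectrum {ι K : Type*} [Fintype ι] [DecidableEq ι] [Field K]
    {A : Matrix ι ι K} {c : K} (h : c ∈ spectrum K A) : ∃ v ≠ 0, A *ᵥ v = c • v := by
  rw [← spectrum_toLin', ← Module.End.hasEigenvalue_iff_mem_spectrum] at h
  obtain ⟨v, hv, hv0⟩ := h.exists_hasEigenvector
  exact ⟨v, hv0, by rwa [Module.End.mem_eigenspace_iff, toLin'_apply] at hv⟩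

theorem ofReal_mem_spectrum_map_iff {ι : Type*} [Fintype ι] [DecidableEq ι]
    {A : Matrix ι ι ℝ} {r : ℝ} :
    (r : ℂ) ∈ spectrum ℂ (A.map Complex.ofReal) ↔ r ∈ spectrum ℝ A := by
  rw [mem_spectrum_iff_isRoot_charpoly, mem_spectrum_iff_isRoot_charpoly]
  exact (charpoly_map A Complex.ofRealHom).symm ▸ Polynomial.isRoot_map_iff Complex.ofReal_injective

theorem exists_gt_smul_le_of_forall_mul_lt {ι : Type*} [Finite ι] {u w : ι → ℝ} {r : ℝ}
    (h : ∀ i, r * u i < w i) : ∃ r' > r, r' • u ≤ w := by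
  obtain ⟨r', hr', hlt⟩ := (Filter.eventually_all.mpr fun i =>
    (continuous_mul_const (u i)).continuousAt.eventually_lt continuousAt_const (h i)).exists_gt
  exact ⟨r', hr', fun i => (hlt i).le⟩

variable {ι : Type*} [Fintype ι]

def collatzWielandtSet (T : Matrix ι ι ℝ) : Set (ℝ × (ι → ℝ)) :=
  {p | 0 ≤ p.1 ∧ p.2 ∈ stdSimplex ℝ ι ∧ p.1 • p.2 ≤ T *ᵥ p.2}

theorem isCompact_collatzWielandtSet (T : Matrix ι ι ℝ) : IsCompact (collatzWielandtSet T) := by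
  have hclosed : IsClosed (collatzWielandtSet T) :=
    (isClosed_le continuous_const continuous_fst).inter
      (((isClosed_stdSimplex ℝ ι).preimage continuous_snd).inter
        (isClosed_le (continuous_fst.smul continuous_snd)
          (continuous_const.matrix_mulVec continuous_snd)))
  have hbound : ∀ p ∈ collatzWielandtSet T, p.1 ≤ ∑ i, ∑ j, |T i j| := by
    rintro ⟨r, x⟩ ⟨-, hx, hrx⟩
    calc r = ∑ i, r * x i := by rw [← Finset.mul_sum, hx.2, mul_one]
      _ ≤ ∑ i, (T *ᵥ x) i := Finset.sum_le_sum fun i _ => hrx i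
      _ ≤ ∑ i, ∑ j, |T i j| := Finset.sum_le_sum fun i _ => Finset.sum_le_sum fun j _ =>
        calc T i j * x j ≤ |T i j| * x j := mul_le_mul_of_nonneg_right (le_abs_self _) (hx.1 j)
          _ ≤ |T i j| := mul_le_of_le_one_right (abs_nonneg _) (mem_Icc_of_mem_stdSimplex hx j).2
  exact (isCompact_Icc.prod (isCompact_stdSimplex ℝ ι)).of_isClosed_subset hclosed
    fun p hp => ⟨⟨hp.1, hbound p hp⟩, hp.2.1⟩

theorem collatzWielandtSet_nonempty [Nonempty ι] {T : Matrix ι ι ℝ} (hT : ∀ i j, 0 ≤ T i j) :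
    (collatzWielandtSet T).Nonempty := by
  classical
  have hx := single_mem_stdSimplex ℝ (Classical.arbitrary ι)
  exact ⟨(0, _), le_rfl, hx, by rw [zero_smul]; exact mulVec_nonneg hT hx.1⟩

theorem mk_inv_sum_smul_mem_collatzWielandtSet {T : Matrix ι ι ℝ} {u : ι → ℝ} {r : ℝ}
    (hr : 0 ≤ r) (hu : 0 ≤ u) (hu0 : u ≠ 0) (h : r • u ≤ T *ᵥ u) :
    (r, (∑ i, u i)⁻¹ • u) ∈ collatzWielandtSet T := by
  have hsum : 0 < ∑ i, u i := by
    simpa [one_dotProduct] using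
      dotProduct_pos_of_pos_of_nonneg_of_ne_zero (v := 1) (fun _ => one_pos) hu hu0
  refine ⟨hr, ⟨fun i => mul_nonneg (inv_nonneg.mpr hsum.le) (hu i), ?_⟩, ?_⟩
  · simp only [Pi.smul_apply, smul_eq_mul, ← Finset.mul_sum, inv_mul_cancel₀ hsum.ne']
  · rw [mulVec_smul, smul_comm]
    exact smul_le_smul_of_nonneg_left h (inv_nonneg.mpr hsum.le)

theorem ne_zero_of_mem_stdSimplex {x : ι → ℝ} (hx : x ∈ stdSimplex ℝ ι) : x ≠ 0 := by
  rintro rfl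
  simpa using hx.2

theorem norm_smul_le_mulVec_norm {T : Matrix ι ι ℝ} (hT : ∀ i j, 0 ≤ T i j) {x : ι → ℂ} {β : ℂ}
    (h : T.map Complex.ofReal *ᵥ x = β • x) :
    ‖β‖ • (fun i => ‖x i‖) ≤ T *ᵥ fun i => ‖x i‖ := fun i =>
  calc ‖β‖ * ‖x i‖ = ‖(T.map Complex.ofReal *ᵥ x) i‖ := by
        rw [h, Pi.smul_apply, smul_eq_mul, norm_mul]
    _ ≤ ∑ j, ‖(T i j : ℂ) * x j‖ := norm_sum_le _ _
    _ = (T *ᵥ fun i => ‖x i‖) i :=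
        Finset.sum_congr rfl fun j _ => by rw [norm_mul, Complex.norm_of_nonneg (hT i j)]

variable [DecidableEq ι] {T : Matrix ι ι ℝ} {k : ℕ}

theorem mulVec_eq_smul_of_isMaxOn (hTk : ∀ i j, 0 < (T ^ k) i j)
    {r : ℝ} {x : ι → ℝ} (hx : (r, x) ∈ collatzWielandtSet T)
    (hmax : IsMaxOn Prod.fst (collatzWielandtSet T) (r, x)) : T *ᵥ x = r • x := by
  by_contra hne
  obtain ⟨hr, hxΔ, hrx⟩ := hx
  have hz : 0 ≤ T *ᵥ x - r • x := sub_nonneg.mpr hrx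
  have hz0 : T *ᵥ x - r • x ≠ 0 := sub_ne_zero.mpr hne
  have hx0 := ne_zero_of_mem_stdSimplex hxΔ
  obtain ⟨i₀, -⟩ := Function.ne_iff.mp hx0
  set u := (T ^ k) *ᵥ x
  have hu : 0 ≤ u := fun i => (mulVec_pos hTk hxΔ.1 hx0 i).le
  have hu0 : u ≠ 0 := fun h => (mulVec_pos hTk hxΔ.1 hx0 i₀).ne' (congrFun h i₀)
  have hTu : T *ᵥ u - r • u = (T ^ k) *ᵥ (T *ᵥ x - r • x) := by
    simp only [u, mulVec_sub, mulVec_smul, mulVec_mulVec, pow_mul_comm']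
  have hlt : ∀ i, r * u i < (T *ᵥ u) i := fun i => by
    simpa [← hTu] using mulVec_pos hTk hz hz0 i
  obtain ⟨r', hr', hr'u⟩ := exists_gt_smul_le_of_forall_mul_lt hlt
  exact (hmax (mk_inv_sum_smul_mem_collatzWielandtSet (hr.trans hr'.le) hu hu0 hr'u)).not_gt hr'

theorem exists_pos_eigenvector_of_pow_pos [Nonempty ι] (hT : ∀ i j, 0 ≤ T i j) (hk : 0 < k)
    (hTk : ∀ i j, 0 < (T ^ k) i j) :
    ∃ r : ℝ, 0 < r ∧ ∃ v, (∀ i, 0 < v i) ∧ T *ᵥ v = r • v := by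
  obtain ⟨⟨r, x⟩, hx, hmax⟩ := (isCompact_collatzWielandtSet T).exists_isMaxOn
    (collatzWielandtSet_nonempty hT) continuous_fst.continuousOn
  have heig := mulVec_eq_smul_of_isMaxOn hTk hx hmax
  obtain ⟨hr, hxΔ, -⟩ := hx
  have hpos : ∀ i, 0 < r ^ k * x i := fun i => by
    simpa [pow_mulVec_of_mulVec_eq_smul heig k] using
      mulVec_pos hTk hxΔ.1 (ne_zero_of_mem_stdSimplex hxΔ) i
  have hrk : 0 < r ^ k := pos_of_mul_pos_left (hpos (Classical.arbitrary ι)) (hxΔ.1 _)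
  have hr0 : r ≠ 0 := by
    rintro rfl
    simp [zero_pow hk.ne'] at hrk
  exact ⟨r, hr.lt_of_ne' hr0, x, fun i => pos_of_mul_pos_right (hpos i) hrk.le, heig⟩

theorem norm_le_of_mem_spectrum (hT : ∀ i j, 0 ≤ T i j) {w : ι → ℝ} {r : ℝ}
    (hw : ∀ i, 0 < w i) (hTw : Tᵀ *ᵥ w = r • w) {β : ℂ}
    (hβ : β ∈ spectrum ℂ (T.map Complex.ofReal)) : ‖β‖ ≤ r := by
  obtain ⟨x, hx0, hx⟩ := exists_mulVec_eq_smul_of_mem_spectrum hβ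
  refine le_of_smul_le_mulVec hw hTw (fun i => norm_nonneg _) ?_ (norm_smul_le_mulVec_norm hT hx)
  exact fun h => hx0 (funext fun i => norm_eq_zero.mp (congrFun h i))

end Matrix

theorem specRad_eq {n : ℕ} {A : Matrix (Fin n) (Fin n) ℝ} {r : ℝ} (hr : 0 ≤ r)
    (hmem : r ∈ spectrum ℝ A) (hle : ∀ β ∈ spectrum ℂ (A.map Complex.ofReal), ‖β‖ ≤ r) :
    specRad A = r :=
  IsGreatest.csSup_eq ⟨⟨r, ofReal_mem_spectrum_map_iff.mpr hmem, by
    rw [Complex.norm_real, Real.norm_of_nonneg hr]⟩, by rintro _ ⟨β, hβ, rfl⟩; exact hle β hβ⟩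

theorem perron_frobenius_positive_eigenvectors {n : ℕ} (hn : 1 ≤ n)
    (T : Matrix (Fin n) (Fin n) ℝ) (hT : T.IsPrimitive') :
    0 < specRad T ∧
    specRad T ∈ spectrum ℝ T ∧
    (∃ v : Fin n → ℝ, (∀ i, 0 < v i) ∧ T.mulVec v = specRad T • v) ∧
    (∃ w : Fin n → ℝ, (∀ i, 0 < w i) ∧ Tᵀ.mulVec w = specRad T • w) := by
  have : Nonempty (Fin n) := ⟨⟨0, hn⟩⟩
  obtain ⟨hT0, k, hk, hTk⟩ := hT
  have hTk' : ∀ i j, 0 < (Tᵀ ^ k) i j := fun i j => by rw [← transpose_pow]; exact hTk j i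
  obtain ⟨r, hr, v, hv, hTv⟩ := exists_pos_eigenvector_of_pow_pos hT0 hk hTk
  obtain ⟨s, -, w, hw, hTw⟩ :=
    exists_pos_eigenvector_of_pow_pos (T := Tᵀ) (fun i j => hT0 j i) hk hTk'
  have hv0 : v ≠ 0 := fun h => (hv ⟨0, hn⟩).ne' (congrFun h _)
  have hw0 : w ≠ 0 := fun h => (hw ⟨0, hn⟩).ne' (congrFun h _)
  obtain rfl : r = s := le_antisymm
    (le_of_smul_le_mulVec hw hTw (fun i => (hv i).le) hv0 hTv.ge)
    (le_of_smul_le_mulVec (T := Tᵀ) hv (by rwa [transpose_transpose]) (fun i => (hw i).le) hw0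
      hTw.ge)
  have hmem : r ∈ spectrum ℝ T := mem_spectrum_of_mulVec_eq_smul hv0 hTv
  rw [specRad_eq hr.le hmem fun β hβ => norm_le_of_mem_spectrum hT0 hw hTw hβ]
  exact ⟨hr, hmem, ⟨v, hv, hTv⟩, ⟨w, hw, hTw⟩⟩
end

section
/- Let M be an n×n primitive matrix with nonnegative integer entries, let u and t be fixed indices, and let E denote the n×n matrix unit whose (u,t) entry is 1 and all other entries are 0. Then for all integers k' > k ≥ 0, the spectral radius of (I + k'·E)·M is strictly greater than the spectral radius of (I + k·E)·M. -/
open Matrix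

/-- A real square matrix is primitive if it is entrywise nonnegative and some
positive power of it has all entries strictly positive. -/
def Matrix.IsPrimitiveReal {n : ℕ} (T : Matrix (Fin n) (Fin n) ℝ) : Prop :=
  (∀ i j, 0 ≤ T i j) ∧ ∃ k : ℕ, 0 < k ∧ ∀ i j, 0 < (T ^ k) i j

/-!
Write `A = (1 + k E) M` and `B = (1 + k' E) M = A + (k' - k) E M`, where `E M ≥ 0` has a positive
entry in row `u` because row `t` of the primitive matrix `M` is nonzero. Since `A ≥ M` entrywise,
`A` is primitive too, say `A ^ s > 0`; then `A ^ s (B - A) A ^ s > 0`, so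
`B ^ (2s+1) ≥ A ^ s B A ^ s ≥ (1 + c) A ^ (2s+1)` entrywise for some `c > 0`.
By Gelfand's formula the spectral radius is monotone on entrywise nonnegative matrices, whence
`ρ(B) ^ (2s+1) ≥ (1 + c) ρ(A) ^ (2s+1)`, and `ρ(A) > 0` because `A ^ s` dominates a positive
multiple of the identity.
-/

open Filter Topology
open scoped NNReal ENNReal Pointwise

theorem spectralRadius_smul {𝕜 A : Type*} [NormedField 𝕜] [Ring A] [Algebra 𝕜 A]
    (k : 𝕜) (a : A) : spectralRadius 𝕜 (k • a) = ‖k‖₊ * spectralRadius 𝕜 a := by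
  rcases eq_or_ne k 0 with rfl | hk
  · simp
  have hσ : spectrum 𝕜 (k • a) = k • spectrum 𝕜 a := by
    simpa using spectrum.unit_smul_eq_smul a (Units.mk0 k hk)
  simp only [spectralRadius, hσ, ← Set.image_smul, iSup_image, ENNReal.mul_iSup, smul_eq_mul,
    nnnorm_mul, ENNReal.coe_mul]

theorem spectralRadius_pow {𝕜 A : Type*} [NormedField 𝕜] [IsAlgClosed 𝕜] [Ring A]
    [Algebra 𝕜 A] (a : A) {m : ℕ} (hm : m ≠ 0) :
    spectralRadius 𝕜 (a ^ m) = spectralRadius 𝕜 a ^ m := by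
  simp only [spectralRadius, ENNReal.iSup₂_pow_of_ne_zero _ hm,
    spectrum.map_pow_of_pos a (Nat.pos_of_ne_zero hm), iSup_image, nnnorm_pow, ENNReal.coe_pow]

theorem spectralRadius_le_of_forall_nnnorm_pow_le {A : Type*} [NormedRing A]
    [NormedAlgebra ℂ A] [CompleteSpace A] {a b : A} (h : ∀ r : ℕ, ‖a ^ r‖₊ ≤ ‖b ^ r‖₊) :
    spectralRadius ℂ a ≤ spectralRadius ℂ b :=
  le_of_tendsto_of_tendsto' (spectrum.pow_nnnorm_pow_one_div_tendsto_nhds_spectralRadius a)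
    (spectrum.pow_nnnorm_pow_one_div_tendsto_nhds_spectralRadius b) fun r =>
    ENNReal.rpow_le_rpow (by exact_mod_cast h r) (by positivity)

theorem ENNReal.lt_of_mul_pow_le_pow {a x y : ℝ≥0∞} {m : ℕ} (ha : 1 < a) (hx : x ≠ 0)
    (hx' : x ≠ ⊤) (h : a * x ^ m ≤ y ^ m) : x < y := by
  by_contra! hyx
  have hxm : x ^ m < a * x ^ m := by
    simpa using ENNReal.mul_lt_mul_left (pow_ne_zero m hx) (pow_ne_top hx') ha
  exact (hxm.trans_le h).not_ge (pow_le_pow_left₀ zero_le hyx m)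

namespace Matrix

section Entrywise

variable {l m n α : Type*} [Fintype m] [Semiring α] [PartialOrder α] [IsOrderedRing α]

theorem mul_apply_nonneg {X : Matrix l m α} {Y : Matrix m n α} (hX : ∀ i j, 0 ≤ X i j)
    (hY : ∀ i j, 0 ≤ Y i j) (i : l) (j : n) : 0 ≤ (X * Y) i j :=
  Finset.sum_nonneg fun p _ => mul_nonneg (hX i p) (hY p j)

theorem mul_apply_mono {X X' : Matrix l m α} {Y Y' : Matrix m n α} (hX : ∀ i j, 0 ≤ X i j)
    (hY : ∀ i j, 0 ≤ Y i j) (hXX' : ∀ i j, X i j ≤ X' i j) (hYY' : ∀ i j, Y i j ≤ Y' i j)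
    (i : l) (j : n) : (X * Y) i j ≤ (X' * Y') i j :=
  Finset.sum_le_sum fun p _ =>
    mul_le_mul (hXX' i p) (hYY' p j) (hY p j) ((hX i p).trans (hXX' i p))

theorem le_mul_mul_apply {o : Type*} [Fintype n] {X : Matrix l m α} {Y : Matrix m n α}
    {Z : Matrix n o α} (hX : ∀ i j, 0 ≤ X i j) (hY : ∀ i j, 0 ≤ Y i j) (hZ : ∀ i j, 0 ≤ Z i j)
    (i : l) (p : m) (q : n) (j : o) : X i p * Y p q * Z q j ≤ (X * Y * Z) i j := by
  have hXY : X i p * Y p q ≤ (X * Y) i q :=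
    Finset.single_le_sum (fun p _ => mul_nonneg (hX i p) (hY p q)) (Finset.mem_univ p)
  calc X i p * Y p q * Z q j ≤ (X * Y) i q * Z q j := mul_le_mul_of_nonneg_right hXY (hZ q j)
    _ ≤ (X * Y * Z) i j := Finset.single_le_sum
        (fun q _ => mul_nonneg (mul_apply_nonneg hX hY i q) (hZ q j)) (Finset.mem_univ q)

theorem pow_apply_mono [DecidableEq m] {X Y : Matrix m m α} (hX : ∀ i j, 0 ≤ X i j)
    (hXY : ∀ i j, X i j ≤ Y i j) (r : ℕ) (i j : m) : (X ^ r) i j ≤ (Y ^ r) i j := by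
  induction r generalizing i j with
  | zero => rfl
  | succ r ih =>
    rw [pow_succ, pow_succ]
    exact mul_apply_mono (pow_apply_nonneg hX r) hX ih hXY i j

end Entrywise

theorem exists_pos_mul_apply_le {m n : Type*} [Finite m] [Finite n] (P Q : Matrix m n ℝ)
    (hQ : ∀ i j, 0 < Q i j) : ∃ c : ℝ, 0 < c ∧ ∀ i j, c * P i j ≤ Q i j := by
  have hlim (i : m) (j : n) : Tendsto (fun c : ℝ => c * P i j) (𝓝[>] 0) (𝓝 0) :=
    ((continuous_mul_const (P i j)).tendsto' 0 0 (zero_mul _)).mono_left nhdsWithin_le_nhds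
  have hev : ∀ᶠ c in 𝓝[>] (0 : ℝ), 0 < c ∧ ∀ i j, c * P i j ≤ Q i j :=
    (eventually_mem_nhdsWithin (a := (0 : ℝ)) (s := Set.Ioi 0)).and <|
      eventually_all.2 fun i => eventually_all.2 fun j =>
        (hlim i j).eventually (ge_mem_nhds (hQ i j))
  exact hev.exists

variable {ι : Type*} [Fintype ι] [DecidableEq ι]

theorem map_ofReal_pow (X : Matrix ι ι ℝ) (r : ℕ) :
    (X ^ r).map Complex.ofReal = X.map Complex.ofReal ^ r :=
  Matrix.map_pow X Complex.ofRealHom r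

section linftyOp

-- The spectral radius does not depend on the norm; any submultiplicative one makes Gelfand's
-- formula available.
attribute [local instance] Matrix.linftyOpSeminormedAddCommGroup Matrix.linftyOpNormedRing
  Matrix.linftyOpNormedAlgebra

theorem linfty_opNNNorm_mono {m n α : Type*} [Fintype m] [Fintype n] [SeminormedAddCommGroup α]
    {P Q : Matrix m n α} (h : ∀ i j, ‖P i j‖₊ ≤ ‖Q i j‖₊) : ‖P‖₊ ≤ ‖Q‖₊ := by
  simp only [linfty_opNNNorm_def]
  exact Finset.sup_mono_fun fun i _ => Finset.sum_le_sum fun j _ => h i j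

theorem spectralRadius_map_ofReal_mono {X Y : Matrix ι ι ℝ} (hX : ∀ i j, 0 ≤ X i j)
    (hXY : ∀ i j, X i j ≤ Y i j) :
    spectralRadius ℂ (X.map Complex.ofReal) ≤ spectralRadius ℂ (Y.map Complex.ofReal) := by
  refine spectralRadius_le_of_forall_nnnorm_pow_le fun r => ?_
  rw [← map_ofReal_pow, ← map_ofReal_pow]
  refine linfty_opNNNorm_mono fun i j => ?_
  have hXr := pow_apply_nonneg hX r i j
  have hXYr := pow_apply_mono hX hXY r i j
  simp only [map_apply, ← NNReal.coe_le_coe, coe_nnnorm, Complex.norm_real,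
    Real.norm_of_nonneg hXr, Real.norm_of_nonneg (hXr.trans hXYr)]
  exact hXYr

end linftyOp

theorem spectralRadius_map_ofReal_pow (X : Matrix ι ι ℝ) {m : ℕ} (hm : m ≠ 0) :
    spectralRadius ℂ ((X ^ m).map Complex.ofReal) =
      spectralRadius ℂ (X.map Complex.ofReal) ^ m := by
  rw [map_ofReal_pow, spectralRadius_pow _ hm]

theorem spectralRadius_map_ofReal_smul {c : ℝ} (hc : 0 ≤ c) (X : Matrix ι ι ℝ) :
    spectralRadius ℂ ((c • X).map Complex.ofReal) =
      ENNReal.ofReal c * spectralRadius ℂ (X.map Complex.ofReal) := by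
  have hmap : (c • X).map Complex.ofReal = (c : ℂ) • X.map Complex.ofReal := by
    ext i j
    simp
  rw [hmap, spectralRadius_smul, Complex.nnnorm_real, ← enorm_eq_nnnorm, Real.enorm_eq_ofReal hc]

end Matrix

section

attribute [local instance] Matrix.linftyOpNormedRing Matrix.linftyOpNormedAlgebra

theorem spectralRadius_map_ofReal_eq_ofReal_specRad {n : ℕ} [NeZero n]
    (A : Matrix (Fin n) (Fin n) ℝ) :
    spectralRadius ℂ (A.map Complex.ofReal) = ENNReal.ofReal (specRad A) := by
  obtain ⟨z, hz, hzρ⟩ := spectrum.exists_nnnorm_eq_spectralRadius (A.map Complex.ofReal)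
  have hmax : IsGreatest {x : ℝ | ∃ β ∈ spectrum ℂ (A.map Complex.ofReal), x = ‖β‖} ‖z‖ := by
    refine ⟨⟨z, hz, rfl⟩, ?_⟩
    rintro _ ⟨β, hβ, rfl⟩
    have : (‖β‖₊ : ℝ≥0∞) ≤ ‖z‖₊ := hzρ ▸ le_iSup₂ (α := ℝ≥0∞) β hβ
    exact_mod_cast this
  rw [specRad, hmax.csSup_eq, ← hzρ]
  exact (ENNReal.ofReal_eq_coe_nnreal (norm_nonneg z)).symm

end

namespace Matrix.IsPrimitiveReal

variable {n : ℕ} {X : Matrix (Fin n) (Fin n) ℝ}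

theorem of_le (hX : X.IsPrimitiveReal) {Y : Matrix (Fin n) (Fin n) ℝ}
    (hXY : ∀ i j, X i j ≤ Y i j) : Y.IsPrimitiveReal := by
  obtain ⟨hX0, s, hs, hXs⟩ := hX
  exact ⟨fun i j => (hX0 i j).trans (hXY i j), s, hs,
    fun i j => (hXs i j).trans_le (pow_apply_mono hX0 hXY s i j)⟩

theorem exists_pos_apply (hX : X.IsPrimitiveReal) (i : Fin n) : ∃ j, 0 < X i j := by
  obtain ⟨hX0, s, hs, hXs⟩ := hX
  by_contra! hrow
  obtain ⟨r, rfl⟩ := Nat.exists_eq_succ_of_ne_zero hs.ne'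
  have hii : (X ^ (r + 1)) i i = 0 := by
    rw [pow_succ', mul_apply]
    exact Finset.sum_eq_zero fun p _ => by rw [le_antisymm (hrow p) (hX0 i p), zero_mul]
  exact (hXs i i).ne' hii

theorem spectralRadius_pos [NeZero n] (hX : X.IsPrimitiveReal) :
    0 < spectralRadius ℂ (X.map Complex.ofReal) := by
  obtain ⟨hX0, s, hs, hXs⟩ := hX
  obtain ⟨c, hc, hcX⟩ := exists_pos_mul_apply_le 1 (X ^ s) hXs
  have h := spectralRadius_map_ofReal_mono (X := c • 1) (Y := X ^ s)
    (fun i j => by rw [smul_apply, one_apply]; positivity) hcX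
  rw [spectralRadius_map_ofReal_smul hc.le, spectralRadius_map_ofReal_pow X hs.ne',
    Matrix.map_one _ Complex.ofReal_zero Complex.ofReal_one, spectrum.spectralRadius_one,
    mul_one] at h
  refine pos_of_ne_zero fun h0 => (ENNReal.ofReal_pos.2 hc).ne' (le_antisymm ?_ zero_le)
  rwa [h0, zero_pow hs.ne'] at h

theorem exists_one_add_mul_pow_apply_le_add_pow (hX : X.IsPrimitiveReal)
    {D : Matrix (Fin n) (Fin n) ℝ} (hD : ∀ i j, 0 ≤ D i j) {p q : Fin n} (hpq : 0 < D p q) :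
    ∃ c > 0, ∃ m ≠ 0, ∀ i j, (1 + c) * (X ^ m) i j ≤ ((X + D) ^ m) i j := by
  obtain ⟨hX0, s, hs, hXs⟩ := hX
  have hXs0 := pow_apply_nonneg hX0 s
  have hXY (i j : Fin n) : X i j ≤ (X + D) i j := le_add_of_nonneg_right (hD i j)
  have hY0 (i j : Fin n) : 0 ≤ (X + D) i j := (hX0 i j).trans (hXY i j)
  have hsandwich (Z : Matrix (Fin n) (Fin n) ℝ) : Z ^ s * Z * Z ^ s = Z ^ (s + 1 + s) := by
    rw [← pow_succ, ← pow_add]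
  have hgap (i j : Fin n) : 0 < (X ^ s * D * X ^ s) i j :=
    (mul_pos (mul_pos (hXs i p) hpq) (hXs q j)).trans_le (le_mul_mul_apply hXs0 hD hXs0 i p q j)
  obtain ⟨c, hc, hcle⟩ := exists_pos_mul_apply_le (X ^ (s + 1 + s)) _ hgap
  refine ⟨c, hc, s + 1 + s, by omega, fun i j => ?_⟩
  calc (1 + c) * (X ^ (s + 1 + s)) i j
      ≤ (X ^ (s + 1 + s)) i j + (X ^ s * D * X ^ s) i j := by linarith [hcle i j]
    _ = (X ^ s * (X + D) * X ^ s) i j := by rw [mul_add, add_mul, hsandwich, Matrix.add_apply]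
    _ ≤ ((X + D) ^ s * (X + D) * (X + D) ^ s) i j :=
        mul_apply_mono (mul_apply_nonneg hXs0 hY0) hXs0
          (mul_apply_mono hXs0 hY0 (pow_apply_mono hX0 hXY s) fun _ _ => le_rfl)
          (pow_apply_mono hX0 hXY s) i j
    _ = ((X + D) ^ (s + 1 + s)) i j := by rw [hsandwich]

theorem spectralRadius_lt_add (hX : X.IsPrimitiveReal) {D : Matrix (Fin n) (Fin n) ℝ}
    (hD : ∀ i j, 0 ≤ D i j) {p q : Fin n} (hpq : 0 < D p q) :
    spectralRadius ℂ (X.map Complex.ofReal) < spectralRadius ℂ ((X + D).map Complex.ofReal) := by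
  have : NeZero n := ⟨p.pos.ne'⟩
  obtain ⟨c, hc, m, hm, hle⟩ := hX.exists_one_add_mul_pow_apply_le_add_pow hD hpq
  have h := spectralRadius_map_ofReal_mono (X := (1 + c) • X ^ m) (Y := (X + D) ^ m)
    (fun i j => mul_nonneg (by linarith) (pow_apply_nonneg hX.1 m i j)) hle
  rw [spectralRadius_map_ofReal_smul (by linarith), spectralRadius_map_ofReal_pow _ hm,
    spectralRadius_map_ofReal_pow _ hm] at h
  refine ENNReal.lt_of_mul_pow_le_pow ?_ hX.spectralRadius_pos.ne' ?_ h
  · simpa using hc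
  · rw [spectralRadius_map_ofReal_eq_ofReal_specRad]
    exact ENNReal.ofReal_ne_top

end Matrix.IsPrimitiveReal

theorem spectral_radius_strict_mono_in_twist_power_general {n : ℕ}
    (M : Matrix (Fin n) (Fin n) ℝ) (hM : M.IsPrimitiveReal)
    (u t : Fin n) (k k' : ℕ) (hkk' : k < k') :
    specRad ((1 + (k : ℝ) • Matrix.single u t (1 : ℝ)) * M) <
      specRad ((1 + (k' : ℝ) • Matrix.single u t (1 : ℝ)) * M) := by
  have : NeZero n := ⟨u.pos.ne'⟩
  set E := Matrix.single u t (1 : ℝ) * M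
  have hE0 : ∀ i j, 0 ≤ E i j :=
    mul_apply_nonneg (fun i j => by rw [single_apply]; positivity) hM.1
  have htwist (c : ℝ) : (1 + c • Matrix.single u t (1 : ℝ)) * M = M + c • E := by
    rw [add_mul, one_mul, smul_mul]
  have hA : ((1 + (k : ℝ) • Matrix.single u t (1 : ℝ)) * M).IsPrimitiveReal :=
    hM.of_le fun i j => by
      rw [htwist, Matrix.add_apply, Matrix.smul_apply, smul_eq_mul]
      exact le_add_of_nonneg_right (mul_nonneg k.cast_nonneg (hE0 i j))
  have hB : (1 + (k' : ℝ) • Matrix.single u t (1 : ℝ)) * M =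
      (1 + (k : ℝ) • Matrix.single u t (1 : ℝ)) * M + ((k' : ℝ) - k) • E := by
    rw [htwist, htwist, add_assoc, ← add_smul, add_sub_cancel]
  have hd : (0 : ℝ) < k' - k := sub_pos.2 (by exact_mod_cast hkk')
  obtain ⟨j₀, hj₀⟩ := hM.exists_pos_apply t
  have hρ := hA.spectralRadius_lt_add (D := ((k' : ℝ) - k) • E) (p := u) (q := j₀)
    (fun i j => mul_nonneg hd.le (hE0 i j))
    (by simpa [E, single_mul_apply_same] using mul_pos hd hj₀)
  rw [← hB, spectralRadius_map_ofReal_eq_ofReal_specRad,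
    spectralRadius_map_ofReal_eq_ofReal_specRad, ENNReal.ofReal_lt_ofReal_iff'] at hρ
  exact hρ.1

theorem spectral_radius_strict_mono_in_twist_power {n : ℕ}
    (M : Matrix (Fin n) (Fin n) ℝ) (hM : M.IsPrimitiveReal)
    (hMint : ∀ i j, ∃ m : ℕ, M i j = (m : ℝ))
    (u t : Fin n) (k k' : ℕ) (hkk' : k < k') :
    specRad ((1 + (k : ℝ) • Matrix.single u t (1 : ℝ)) * M) <
      specRad ((1 + (k' : ℝ) • Matrix.single u t (1 : ℝ)) * M) :=
  spectral_radius_strict_mono_in_twist_power_general M hM u t k k' hkk'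
end

section
/- Let M_L = [[1,1],[0,1]] and M_R = [[1,0],[1,1]], let ℓ ≥ 1, and let m_1, n_1, …, m_ℓ, n_ℓ be positive integers. Then the spectral radius of M' = M_L^{m_1} · M_R^{n_1} · ⋯ · M_L^{m_ℓ} · M_R^{n_ℓ} is at least ((3 + √5)/2)^ℓ; equivalently, the logarithm of the spectral radius of M' is at least ℓ · log((3 + √5)/2). -/
open Matrix

/-- The matrix with rows (1,1) and (0,1). -/
def ML : Matrix (Fin 2) (Fin 2) ℝ := !![1, 1; 0, 1]

/-- The matrix with rows (1,0) and (1,1). -/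
def MR : Matrix (Fin 2) (Fin 2) ℝ := !![1, 0; 1, 1]

/-!
Every factor `M_L ^ a * M_R ^ b = !![1 + a * b, a; b, 1]` has determinant 1 and, for `a, b ≥ 1`,
dominates `C = M_L * M_R = !![2, 1; 1, 1]` entrywise. So the product `M` has determinant 1 and
`tr M ≥ tr (C ^ ℓ) = μ ^ ℓ + μ⁻¹ ^ ℓ`, where `μ = (3 + √5) / 2` and `μ⁻¹` are the eigenvalues of `C`.
A real `2 × 2` matrix of determinant 1 and trace `t ≥ x + x⁻¹` with `x > 0` has the real eigenvalue
`(t + √(t ^ 2 - 4)) / 2 ≥ x`, whence the spectral radius of `M` is at least `μ ^ ℓ`.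
-/

namespace Matrix

variable {l m n R : Type*}

theorem mul_apply_le_mul_apply [Fintype m] [Semiring R] [PartialOrder R] [IsOrderedRing R]
    {A A' : Matrix l m R} {B B' : Matrix m n R} (hA' : ∀ i j, 0 ≤ A' i j)
    (hB' : ∀ i j, 0 ≤ B' i j) (hA : ∀ i j, A' i j ≤ A i j) (hB : ∀ i j, B' i j ≤ B i j)
    (i : l) (j : n) : (A' * B') i j ≤ (A * B) i j :=
  Finset.sum_le_sum fun k _ => mul_le_mul (hA i k) (hB k j) (hB' k j) ((hA' i k).trans (hA i k))

theorem pow_length_apply_le_prod_apply [Fintype n] [DecidableEq n] [Semiring R] [PartialOrder R]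
    [IsOrderedRing R] {A : Matrix n n R} (hA : ∀ i j, 0 ≤ A i j) {L : List (Matrix n n R)}
    (hL : ∀ B ∈ L, ∀ i j, A i j ≤ B i j) (i j : n) : (A ^ L.length) i j ≤ L.prod i j := by
  induction L generalizing i j with
  | nil => rfl
  | cons B L ih =>
    rw [List.length_cons, pow_succ', List.prod_cons]
    exact mul_apply_le_mul_apply hA (pow_apply_nonneg hA _) (hL B List.mem_cons_self)
      (ih fun C hC => hL C (List.mem_cons_of_mem B hC)) i j

theorem sq_fin_two [CommRing R] (A : Matrix (Fin 2) (Fin 2) R) :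
    A ^ 2 = A.trace • A - A.det • 1 := by
  ext i j
  fin_cases i <;> fin_cases j <;>
    simp [sq, mul_apply, trace_fin_two, det_fin_two] <;> ring

theorem trace_pow_fin_two [CommRing R] {A : Matrix (Fin 2) (Fin 2) R} {x y : R}
    (htr : A.trace = x + y) (hdet : A.det = x * y) (k : ℕ) :
    (A ^ k).trace = x ^ k + y ^ k := by
  induction k using Nat.twoStepInduction with
  | zero => norm_num [trace_one]
  | one => simpa using htr
  | more k ih₀ ih₁ =>
    have hrec : (A ^ (k + 2)).trace = A.trace * (A ^ (k + 1)).trace - A.det * (A ^ k).trace := by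
      rw [pow_add, sq_fin_two, mul_sub, Matrix.mul_smul, Matrix.mul_smul, mul_one, ← pow_succ,
        trace_sub, trace_smul, trace_smul, smul_eq_mul, smul_eq_mul]
    rw [hrec, ih₀, ih₁, htr, hdet]
    ring

theorem mem_spectrum_fin_two_iff {K : Type*} [Field K] {A : Matrix (Fin 2) (Fin 2) K} {μ : K} :
    μ ∈ spectrum K A ↔ μ ^ 2 - A.trace * μ + A.det = 0 := by
  simp [mem_spectrum_iff_isRoot_charpoly, charpoly_fin_two]

theorem det_list_prod_eq_one [Fintype n] [DecidableEq n] [CommRing R] {L : List (Matrix n n R)}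
    (hL : ∀ A ∈ L, A.det = 1) : L.prod.det = 1 := by
  rw [← coe_detMonoidHom, map_list_prod]
  exact List.prod_eq_one fun d hd => by
    obtain ⟨A, hA, rfl⟩ := List.mem_map.1 hd
    exact hL A hA

end Matrix

theorem norm_le_specRad {n : ℕ} (A : Matrix (Fin n) (Fin n) ℝ) {β : ℂ}
    (hβ : β ∈ spectrum ℂ (A.map Complex.ofReal)) : ‖β‖ ≤ specRad A := by
  refine le_csSup ?_ ⟨β, hβ, rfl⟩
  refine ((Matrix.finite_spectrum (A.map Complex.ofReal)).image (‖·‖)).bddAbove.mono ?_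
  rintro _ ⟨β, hβ, rfl⟩
  exact ⟨β, hβ, rfl⟩

theorem exists_root_ge_of_add_le {x y t : ℝ} (hx : 0 < x) (hxy : x * y = 1) (ht : x + y ≤ t) :
    ∃ r, x ≤ r ∧ r ^ 2 - t * r + 1 = 0 := by
  have hy : 0 < y := pos_of_mul_pos_right (hxy ▸ one_pos) hx.le
  have hdisc : 0 ≤ t ^ 2 - 4 := by nlinarith [sq_nonneg (x - y)]
  have hsqrt := Real.sq_sqrt hdisc
  refine ⟨(t + √(t ^ 2 - 4)) / 2, ?_, by nlinarith⟩
  -- `x` lies left of the larger root since `x ^ 2 - t * x + 1 = x * (x + y - t) ≤ 0`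
  have : 2 * x - t ≤ √(t ^ 2 - 4) :=
    Real.le_sqrt_of_sq_le (by nlinarith [mul_le_mul_of_nonneg_left ht hx.le])
  linarith

theorem le_specRad_of_det_eq_one {M : Matrix (Fin 2) (Fin 2) ℝ} (hdet : M.det = 1) {x y : ℝ}
    (hx : 0 < x) (hxy : x * y = 1) (htr : x + y ≤ M.trace) : x ≤ specRad M := by
  obtain ⟨r, hxr, hr⟩ := exists_root_ge_of_add_le hx hxy htr
  have hmem : (r : ℂ) ∈ spectrum ℂ (M.map Complex.ofReal) := by
    rw [← hdet, Matrix.trace_fin_two, Matrix.det_fin_two] at hr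
    rw [Matrix.mem_spectrum_fin_two_iff, Matrix.trace_fin_two, Matrix.det_fin_two]
    simp only [Matrix.map_apply]
    exact_mod_cast congrArg Complex.ofReal hr
  calc x ≤ r := hxr
    _ = ‖(r : ℂ)‖ := (Complex.norm_of_nonneg (hx.le.trans hxr)).symm
    _ ≤ specRad M := norm_le_specRad M hmem

theorem ML_pow (a : ℕ) : ML ^ a = !![1, (a : ℝ); 0, 1] := by
  induction a with
  | zero => simp [Matrix.one_fin_two]
  | succ a ih => rw [pow_succ, ih, ML, Matrix.mul_fin_two]; norm_num [add_comm]

theorem MR_pow (b : ℕ) : MR ^ b = !![1, 0; (b : ℝ), 1] := by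
  induction b with
  | zero => simp [Matrix.one_fin_two]
  | succ b ih => rw [pow_succ, ih, MR, Matrix.mul_fin_two]; norm_num

theorem ML_pow_mul_MR_pow (a b : ℕ) :
    ML ^ a * MR ^ b = !![1 + (a : ℝ) * b, (a : ℝ); (b : ℝ), 1] := by
  rw [ML_pow, MR_pow, Matrix.mul_fin_two]
  norm_num [mul_comm]

theorem det_ML_pow_mul_MR_pow (a b : ℕ) : (ML ^ a * MR ^ b).det = 1 := by
  simp [ML_pow_mul_MR_pow, Matrix.det_fin_two]

theorem ML_mul_MR : ML * MR = !![2, 1; 1, 1] := by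
  rw [ML, MR, Matrix.mul_fin_two]
  norm_num

theorem ML_mul_MR_nonneg (i j : Fin 2) : 0 ≤ (ML * MR) i j := by
  rw [ML_mul_MR]
  fin_cases i <;> fin_cases j <;> norm_num

theorem ML_mul_MR_apply_le {a b : ℕ} (ha : 0 < a) (hb : 0 < b) (i j : Fin 2) :
    (ML * MR) i j ≤ (ML ^ a * MR ^ b) i j := by
  have ha' : (1 : ℝ) ≤ a := by exact_mod_cast ha
  have hb' : (1 : ℝ) ≤ b := by exact_mod_cast hb
  rw [ML_mul_MR, ML_pow_mul_MR_pow]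
  fin_cases i <;> fin_cases j <;> simp <;> nlinarith

theorem trace_ML_mul_MR_pow (k : ℕ) :
    ((ML * MR) ^ k).trace = ((3 + √5) / 2) ^ k + ((3 - √5) / 2) ^ k := by
  have h5 := Real.sq_sqrt (show (0 : ℝ) ≤ 5 by norm_num)
  refine Matrix.trace_pow_fin_two ?_ ?_ k
  · rw [ML_mul_MR, Matrix.trace_fin_two_of]
    ring
  · rw [ML_mul_MR, Matrix.det_fin_two_of]
    nlinarith

theorem specRad_product_ge_general (ℓ : ℕ) (m n : Fin ℓ → ℕ)
    (hm : ∀ i, 0 < m i) (hn : ∀ i, 0 < n i) :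
    ((3 + Real.sqrt 5) / 2) ^ ℓ ≤
      specRad ((List.ofFn fun i : Fin ℓ => ML ^ (m i) * MR ^ (n i)).prod) ∧
    (ℓ : ℝ) * Real.log ((3 + Real.sqrt 5) / 2) ≤
      Real.log (specRad ((List.ofFn fun i : Fin ℓ => ML ^ (m i) * MR ^ (n i)).prod)) := by
  set L := List.ofFn fun i : Fin ℓ => ML ^ (m i) * MR ^ (n i)
  have hdet : L.prod.det = 1 :=
    Matrix.det_list_prod_eq_one <| List.forall_mem_ofFn_iff.2 fun i => det_ML_pow_mul_MR_pow _ _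
  have hdom : ∀ i j, ((ML * MR) ^ ℓ) i j ≤ L.prod i j := by
    simpa [L] using Matrix.pow_length_apply_le_prod_apply ML_mul_MR_nonneg
      (List.forall_mem_ofFn_iff.2 fun i => ML_mul_MR_apply_le (hm i) (hn i))
  have htr : ((3 + √5) / 2) ^ ℓ + ((3 - √5) / 2) ^ ℓ ≤ L.prod.trace := by
    rw [← trace_ML_mul_MR_pow, Matrix.trace_fin_two, Matrix.trace_fin_two]
    exact add_le_add (hdom 0 0) (hdom 1 1)
  have hμ : 0 < ((3 + √5) / 2) ^ ℓ := by positivity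
  have hkey : ((3 + √5) / 2) ^ ℓ ≤ specRad L.prod := by
    refine le_specRad_of_det_eq_one hdet hμ ?_ htr
    rw [← mul_pow, ← mul_div_mul_comm, ← sq_sub_sq, Real.sq_sqrt (by norm_num)]
    norm_num
  exact ⟨hkey, by rw [← Real.log_pow]; exact Real.log_le_log hμ hkey⟩

theorem specRad_product_ge (ℓ : ℕ) (hℓ : 1 ≤ ℓ) (m n : Fin ℓ → ℕ)
    (hm : ∀ i, 0 < m i) (hn : ∀ i, 0 < n i) :
    ((3 + Real.sqrt 5) / 2) ^ ℓ ≤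
      specRad ((List.ofFn fun i : Fin ℓ => ML ^ (m i) * MR ^ (n i)).prod) ∧
    (ℓ : ℝ) * Real.log ((3 + Real.sqrt 5) / 2) ≤
      Real.log (specRad ((List.ofFn fun i : Fin ℓ => ML ^ (m i) * MR ^ (n i)).prod)) :=
  specRad_product_ge_general ℓ m n hm hn
end
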